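/- Let R ⊂ S be an integral FCP extension such that (R,P) and (S,N) are local rings and R/P ⊂ S/N is a finite separable field extension. Then there do not exist distinct T, U ∈ [R,S] such that T ⊂ S and U ⊂ S are both minimal ramified extensions (i.e., minimal and subintegral) with equal conductors (T:S) = (U:S). -/

import Mathlib

/-!
Let `T ⊂ S` be minimal ramified, with `S` local with maximal ideal `N`. By Nakayama, `N ∩ T`
lies in the conductor `(T:S)`. For `z ∈ N \ T` one gets `N ⊆ (T:S) + zS` and `z² ∈ T`, so even
`N² ⊆ (T:S)`.
Now let `(T:S) = (U:S) = C` and `t ∈ T`. Lift the minimal polynomial of the residue of `t` to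
`F ∈ R[X]`; separability makes `F'(t)` a unit. Pick `u ∈ U` with `t ≡ u mod N`: in
`F(t) = F(u) + F'(u)(t - u) + k(t - u)²` the terms `F(t)`, `F(u)` and `(t - u)²` lie in `C`, hence
so does `t - u`, and `t ∈ U`. So `T ⊆ U`, and symmetrically.
-/

/-- An extension `R ⊆ S` has FCP if every chain of intermediate `R`-subalgebras of `S`
is finite. -/
def Algebra.HasFCP (R S : Type*) [CommRing R] [CommRing S] [Algebra R S] : Prop :=
  ∀ C : Set (Subalgebra R S), IsChain (· ≤ ·) C → C.Finite

/-- The residual field extension map `κ(Q ∩ A) → κ(Q)` attached to a ring morphism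
`f : A → B` and a prime ideal `Q` of `B`. -/
noncomputable def residualMap {A B : Type*} [CommRing A] [CommRing B] (f : A →+* B)
    (Q : Ideal B) [Q.IsPrime] :
    IsLocalRing.ResidueField (Localization.AtPrime (Q.comap f)) →+*
      IsLocalRing.ResidueField (Localization.AtPrime Q) :=
  IsLocalRing.ResidueField.map (Localization.localRingHom (Q.comap f) Q f rfl)

/-- An extension `A ⊆ B` is infra-integral if it is integral and all its residual
extensions are isomorphisms. -/
def InfraIntegralExt (A B : Type*) [CommRing A] [CommRing B] [Algebra A B] : Prop :=
  Algebra.IsIntegral A B ∧ ∀ (Q : Ideal B) [Q.IsPrime],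
    Function.Bijective (residualMap (algebraMap A B) Q)

/-- An extension `A ⊆ B` is subintegral if it is infra-integral and `Spec B → Spec A` is
injective. -/
def SubintegralExt (A B : Type*) [CommRing A] [CommRing B] [Algebra A B] : Prop :=
  InfraIntegralExt A B ∧
    Function.Injective fun Q : PrimeSpectrum B => PrimeSpectrum.comap (algebraMap A B) Q

/-- The conductor `(T:S)` of an intermediate ring `T` of the extension `R ⊆ S`, i.e. the
ideal of `S` of all `s ∈ S` with `sS ⊆ T`. -/
def conductorOf {R S : Type*} [CommRing R] [CommRing S] [Algebra R S]
    (T : Subalgebra R S) : Ideal S where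
  carrier := {s : S | ∀ t : S, s * t ∈ T}
  add_mem' := by
    intro a b ha hb t
    rw [add_mul]
    exact add_mem (ha t) (hb t)
  zero_mem' := by
    intro t
    rw [zero_mul]
    exact zero_mem _
  smul_mem' := by
    intro c x hx t
    rw [smul_eq_mul, mul_assoc, mul_comm c, mul_assoc]
    exact hx (t * c)

open IsLocalRing Polynomial

lemma exists_sub_mem_of_surjective_residualMap {A B : Type*} [CommRing A] [CommRing B]
    (f : A →+* B) (Q : Ideal B) [Q.IsPrime] [(Q.comap f).IsMaximal]
    (h : Function.Surjective (residualMap f Q)) (b : B) : ∃ a, b - f a ∈ Q := by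
  obtain ⟨y, hy⟩ := h (algebraMap B Q.ResidueField b)
  obtain ⟨a, rfl⟩ := (Q.comap f).algebraMap_residueField_surjective y
  refine ⟨a, Ideal.algebraMap_residueField_eq_zero.mp ?_⟩
  rw [map_sub, ← hy]
  exact sub_eq_zero.mpr (Ideal.ResidueField.map_algebraMap _ _ f rfl a)

lemma aeval_sub_aeval_mem {R S : Type*} [CommRing R] [CommRing S] [Algebra R S] {I : Ideal S}
    {a b : S} (h : a - b ∈ I) (F : R[X]) : aeval a F - aeval b F ∈ I := by
  simpa only [eval_map_algebraMap] using
    Ideal.mem_of_dvd _ (sub_dvd_eval_sub a b (F.map (algebraMap R S))) h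

namespace Subalgebra

variable {R S : Type*} [CommRing R] [CommRing S] [Algebra R S] {T : Subalgebra R S}

lemma aeval_mem {x : S} (hx : x ∈ T) (F : R[X]) : aeval x F ∈ T := by
  simpa using (aeval (⟨x, hx⟩ : T) F).2

lemma mem_of_mem_conductorOf {x : S} (hx : x ∈ conductorOf T) : x ∈ T := by
  simpa using hx 1

lemma exists_add_eq_of_covBy_top (hT : T ⋖ ⊤) {I : Ideal S} (hI : ¬(I : Set S) ⊆ T) (s : S) :
    ∃ t ∈ T, ∃ i ∈ I, t + i = s := by
  let W : Subalgebra R S := Submodule.toSubalgebra (T.toSubmodule ⊔ I.restrictScalars R)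
    (Submodule.mem_sup_left T.one_mem) fun x y hx hy => by
      obtain ⟨a, ha, i, hi, rfl⟩ := Submodule.mem_sup.mp hx
      obtain ⟨b, hb, j, hj, rfl⟩ := Submodule.mem_sup.mp hy
      rw [show (a + i) * (b + j) = a * b + (a * j + i * (b + j)) by ring]
      exact Submodule.add_mem_sup (T.mul_mem ha hb)
        (I.add_mem (I.mul_mem_left a hj) (I.mul_mem_right _ hi))
  have hTW : T < W := lt_of_le_not_ge (fun x hx => Submodule.mem_sup_left hx)
    fun hWT => hI fun x hx => hWT (Submodule.mem_sup_right hx)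
  have hW : W = ⊤ := (hT.eq_or_eq hTW.le le_top).resolve_left hTW.ne'
  exact Submodule.mem_sup.mp (hW ▸ Algebra.mem_top : s ∈ W)

lemma adjoin_eq_top_of_covBy_top (hT : T ⋖ ⊤) {x : S} (hx : x ∉ T) :
    Algebra.adjoin T {x} = ⊤ := by
  have hle : T ≤ (Algebra.adjoin T {x}).restrictScalars R := fun t ht =>
    (Algebra.adjoin T {x}).algebraMap_mem (⟨t, ht⟩ : T)
  have hlt : T < (Algebra.adjoin T {x}).restrictScalars R :=
    lt_of_le_of_ne hle fun h => hx (h ▸ Algebra.self_mem_adjoin_singleton T x)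
  apply restrictScalars_injective R
  rw [(hT.eq_or_eq hlt.le le_top).resolve_left hlt.ne', restrictScalars_top]

lemma finite_of_covBy_top (hT : T ⋖ ⊤) [Algebra.IsIntegral T S] : Module.Finite T S := by
  obtain ⟨x, -, hx⟩ := SetLike.exists_of_lt hT.lt
  have : Algebra.FiniteType T S := ⟨⟨{x}, by simpa using adjoin_eq_top_of_covBy_top hT hx⟩⟩
  exact Algebra.IsIntegral.finite

variable (T) in
lemma isLocalRing_of_isIntegral [IsLocalRing S] [Algebra.IsIntegral T S] : IsLocalRing T :=
  T.toSubring.isLocalRing_of_unit fun x hx hu =>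
    isUnit_of_map_unit (algebraMap T S) ⟨x, hx⟩ (by exact hu)

lemma map_maximalIdeal_le_of_covBy_top (hT : T ⋖ ⊤) [IsLocalRing T] [Module.Finite T S] :
    ((maximalIdeal T).map (algebraMap T S) : Set S) ⊆ T := by
  by_contra hI
  obtain ⟨x, -, hx⟩ := SetLike.exists_of_lt hT.lt
  -- otherwise `S = T + 𝔪 S` for the maximal ideal `𝔪` of `T`, and Nakayama gives `S = T`
  have hTop : (⊤ : Submodule T S) ≤ (⊥ : Subalgebra T S).toSubmodule := by
    refine Submodule.le_of_le_smul_of_le_jacobson_bot Module.Finite.fg_top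
      (jacobson_eq_maximalIdeal ⊥ bot_ne_top).ge fun s _ => ?_
    obtain ⟨t, ht, i, hi, rfl⟩ := exists_add_eq_of_covBy_top hT hI s
    rw [Ideal.smul_top_eq_map]
    exact Submodule.add_mem_sup (Algebra.mem_bot.mpr ⟨⟨t, ht⟩, rfl⟩) hi
  obtain ⟨t, rfl⟩ := Algebra.mem_bot.mp (hTop (Submodule.mem_top (x := x)))
  exact hx t.2

lemma coe_mem_conductorOf_of_mem_maximalIdeal (hT : T ⋖ ⊤) [IsLocalRing T] [Module.Finite T S]
    {t : T} (ht : t ∈ maximalIdeal T) : (t : S) ∈ conductorOf T := fun s =>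
  map_maximalIdeal_le_of_covBy_top hT (Ideal.mul_mem_right s _ (Ideal.mem_map_of_mem _ ht))

section LocalRing

variable [IsLocalRing S]

lemma mem_conductorOf_of_mem_maximalIdeal (hT : T ⋖ ⊤) [Algebra.IsIntegral T S] {t : S}
    (htT : t ∈ T) (htN : t ∈ maximalIdeal S) : t ∈ conductorOf T := by
  have := T.isLocalRing_of_isIntegral
  have := finite_of_covBy_top hT
  exact coe_mem_conductorOf_of_mem_maximalIdeal hT (t := ⟨t, htT⟩)
    fun hu => htN (hu.map (algebraMap T S))

lemma conductorOf_le_maximalIdeal (hT : T ≠ ⊤) : conductorOf T ≤ maximalIdeal S :=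
  le_maximalIdeal fun h => hT (eq_top_iff.mpr fun s _ => by
    simpa using (h ▸ Submodule.mem_top : (1 : S) ∈ conductorOf T) s)

lemma exists_sub_mem_maximalIdeal (hinf : InfraIntegralExt T S) (s : S) :
    ∃ t ∈ T, s - t ∈ maximalIdeal S := by
  have := hinf.1
  have := Ideal.isMaximal_comap_of_isIntegral_of_isMaximal (R := T) (maximalIdeal S)
  obtain ⟨t, ht⟩ := exists_sub_mem_of_surjective_residualMap _ _ (hinf.2 (maximalIdeal S)).2 s
  exact ⟨t, t.2, ht⟩

lemma maximalIdeal_le_conductorOf_sup_span (hT : T ⋖ ⊤) [Algebra.IsIntegral T S] {w : S}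
    (hwN : w ∈ maximalIdeal S) (hwT : w ∉ T) :
    maximalIdeal S ≤ conductorOf T ⊔ Ideal.span {w} := by
  intro a ha
  have hI : ¬(Ideal.span {w} : Set S) ⊆ T := fun h => hwT (h (Ideal.mem_span_singleton_self w))
  obtain ⟨t, ht, i, hi, rfl⟩ := exists_add_eq_of_covBy_top hT hI a
  have hiN : i ∈ maximalIdeal S := (Ideal.span_singleton_le_iff_mem _).mpr hwN hi
  exact Submodule.add_mem_sup
    (mem_conductorOf_of_mem_maximalIdeal hT ht (by simpa using sub_mem ha hiN)) hi

lemma mul_self_mem_of_mem_maximalIdeal (hT : T ⋖ ⊤) [Algebra.IsIntegral T S] {z : S}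
    (hzN : z ∈ maximalIdeal S) (hzT : z ∉ T) : z * z ∈ T := by
  by_contra h
  obtain ⟨c, hc, i, hi, hci⟩ := Submodule.mem_sup.mp
    (maximalIdeal_le_conductorOf_sup_span hT (Ideal.mul_mem_left _ z hzN) h hzN)
  obtain ⟨s, rfl⟩ := Ideal.mem_span_singleton'.mp hi
  have hu : IsUnit (1 - s * z) :=
    isUnit_one_sub_self_of_mem_nonunits _ (Ideal.mul_mem_left _ s hzN)
  have hzc : z * (1 - s * z) = c := by linear_combination -hci
  exact hzT (mem_of_mem_conductorOf ((Ideal.mul_unit_mem_iff_mem _ hu).mp (hzc ▸ hc)))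

lemma maximalIdeal_sq_le_conductorOf (hT : T ⋖ ⊤) (hinf : InfraIntegralExt T S) :
    maximalIdeal S ^ 2 ≤ conductorOf T := by
  have := hinf.1
  obtain ⟨x, -, hx⟩ := SetLike.exists_of_lt hT.lt
  obtain ⟨t, ht, hxt⟩ := exists_sub_mem_maximalIdeal hinf x
  have hzT : x - t ∉ T := fun h => hx (by simpa using add_mem h ht)
  have hz2 : (x - t) * (x - t) ∈ conductorOf T := mem_conductorOf_of_mem_maximalIdeal hT
    (mul_self_mem_of_mem_maximalIdeal hT hxt hzT) (Ideal.mul_mem_left _ _ hxt)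
  calc maximalIdeal S ^ 2 ≤ (conductorOf T ⊔ Ideal.span {x - t}) ^ 2 :=
        Ideal.pow_right_mono (maximalIdeal_le_conductorOf_sup_span hT hxt hzT) 2
    _ ≤ conductorOf T := by
      rw [sq, Ideal.sup_mul, Ideal.mul_sup, Ideal.mul_sup, Ideal.span_singleton_mul_span_singleton]
      exact sup_le (sup_le Ideal.mul_le_left Ideal.mul_le_left)
        (sup_le Ideal.mul_le_right ((Ideal.span_singleton_le_iff_mem _).mpr hz2))

lemma mem_of_aeval_mem_conductorOf (hT : T ⋖ ⊤) (hinf : InfraIntegralExt T S) {F : R[X]} {x : S}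
    (hF : aeval x F ∈ conductorOf T)
    (hF' : aeval x (derivative F) ∉ maximalIdeal S) : x ∈ T := by
  have := hinf.1
  obtain ⟨t, ht, hxt⟩ := exists_sub_mem_maximalIdeal hinf x
  have hFt : aeval t F ∈ conductorOf T := mem_conductorOf_of_mem_maximalIdeal hT (aeval_mem ht F)
    (by simpa using sub_mem (conductorOf_le_maximalIdeal hT.ne hF) (aeval_sub_aeval_mem hxt F))
  have hF't : IsUnit (aeval t (derivative F)) := by
    by_contra h
    have := add_mem (aeval_sub_aeval_mem hxt (derivative F)) ((mem_maximalIdeal _).mpr h)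
    exact hF' (by simpa using this)
  obtain ⟨k, hk⟩ := (F.map (algebraMap R S)).binomExpansion t (x - t)
  simp only [add_sub_cancel, eval_map_algebraMap, derivative_map] at hk
  have hlin : aeval t (derivative F) * (x - t) ∈ conductorOf T := by
    rw [show aeval t (derivative F) * (x - t) = aeval x F - aeval t F - k * (x - t) ^ 2 by
      linear_combination -hk]
    exact sub_mem (sub_mem hF hFt) (Ideal.mul_mem_left _ _
      (maximalIdeal_sq_le_conductorOf hT hinf (Ideal.pow_mem_pow hxt 2)))
  simpa using add_mem (mem_of_mem_conductorOf ((Ideal.unit_mul_mem_iff_mem _ hF't).mp hlin)) ht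

end LocalRing

end Subalgebra

section ResidueField

variable {R S : Type*} [CommRing R] [CommRing S] [Algebra R S]
  [IsLocalRing R] [IsLocalRing S] [IsLocalHom (algebraMap R S)]

lemma residue_aeval (F : R[X]) (x : S) :
    letI := (ResidueField.map (algebraMap R S)).toAlgebra
    residue S (aeval x F) = aeval (residue S x) (F.map (residue R)) := by
  let := (ResidueField.map (algebraMap R S)).toAlgebra
  have hcomm : (residue S).comp (algebraMap R S) =
      (algebraMap (ResidueField R) (ResidueField S)).comp (residue R) :=
    RingHom.ext fun r => (ResidueField.map_residue (algebraMap R S) r).symm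
  simp only [aeval_def]
  rw [hom_eval₂, hcomm, eval₂_map]

lemma exists_aeval_mem_maximalIdeal_of_isSeparable
    (hsep : letI := (ResidueField.map (algebraMap R S)).toAlgebra
      Algebra.IsSeparable (ResidueField R) (ResidueField S)) (x : S) :
    ∃ F : R[X], aeval x F ∈ maximalIdeal S ∧ aeval x (derivative F) ∉ maximalIdeal S := by
  let := (ResidueField.map (algebraMap R S)).toAlgebra
  obtain ⟨F, hF⟩ := map_surjective (residue R) residue_surjective
    (minpoly (ResidueField R) (residue S x))
  refine ⟨F, ?_, ?_⟩
  · rw [← residue_eq_zero_iff, residue_aeval, hF, minpoly.aeval]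
  · rw [← residue_eq_zero_iff, residue_aeval, ← derivative_map, hF]
    exact (Algebra.IsSeparable.isSeparable _ _).aeval_derivative_ne_zero (minpoly.aeval _ _)

lemma Subalgebra.le_of_conductorOf_eq [Algebra.IsIntegral R S]
    (hsep : letI := (ResidueField.map (algebraMap R S)).toAlgebra
      Algebra.IsSeparable (ResidueField R) (ResidueField S))
    {T U : Subalgebra R S} (hT : T ⋖ ⊤) (hU : U ⋖ ⊤) (hinf : InfraIntegralExt U S)
    (hTU : conductorOf T = conductorOf U) : T ≤ U := by
  have := Algebra.IsIntegral.tower_top (R := R) (S := T) (T := S)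
  intro x hx
  obtain ⟨F, hFN, hF'N⟩ := exists_aeval_mem_maximalIdeal_of_isSeparable hsep x
  exact U.mem_of_aeval_mem_conductorOf hU hinf
    (hTU ▸ T.mem_conductorOf_of_mem_maximalIdeal hT (T.aeval_mem hx F) hFN) hF'N

end ResidueField

theorem stmt17_general {R S : Type*} [CommRing R] [CommRing S] [Algebra R S]
    [IsLocalRing R] [IsLocalRing S] [IsLocalHom (algebraMap R S)]
    (hint : Algebra.IsIntegral R S)
    (hres :
      letI : Algebra (IsLocalRing.ResidueField R) (IsLocalRing.ResidueField S) :=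
        (IsLocalRing.ResidueField.map (algebraMap R S)).toAlgebra
      Module.Finite (IsLocalRing.ResidueField R) (IsLocalRing.ResidueField S) ∧
        Algebra.IsSeparable (IsLocalRing.ResidueField R) (IsLocalRing.ResidueField S)) :
    ∀ T U : Subalgebra R S,
      T ⋖ (⊤ : Subalgebra R S) → SubintegralExt T S →
      U ⋖ (⊤ : Subalgebra R S) → SubintegralExt U S →
      conductorOf T = conductorOf U → T = U := by
  intro T U hT hsT hU hsU hTU
  exact le_antisymm (Subalgebra.le_of_conductorOf_eq hres.2 hT hU hsU.1 hTU)
    (Subalgebra.le_of_conductorOf_eq hres.2 hU hT hsT.1 hTU.symm)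

/-- Let `R ⊂ S` be an integral FCP extension of local rings such that
the residue field extension `R/P ⊂ S/N` is finite and separable.  Then there do not exist
two distinct intermediate rings `T, U` such that `T ⊂ S` and `U ⊂ S` are minimal ramified
(i.e. minimal and subintegral) with the same conductor. -/
theorem stmt17 {R S : Type*} [CommRing R] [CommRing S] [Algebra R S]
    [IsLocalRing R] [IsLocalRing S] [IsLocalHom (algebraMap R S)]
    (hinj : Function.Injective (algebraMap R S))
    (hproper : (⊥ : Subalgebra R S) ≠ ⊤)
    (hFCP : Algebra.HasFCP R S)
    (hint : Algebra.IsIntegral R S)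
    (hres :
      letI : Algebra (IsLocalRing.ResidueField R) (IsLocalRing.ResidueField S) :=
        (IsLocalRing.ResidueField.map (algebraMap R S)).toAlgebra
      Module.Finite (IsLocalRing.ResidueField R) (IsLocalRing.ResidueField S) ∧
        Algebra.IsSeparable (IsLocalRing.ResidueField R) (IsLocalRing.ResidueField S)) :
    ∀ T U : Subalgebra R S,
      T ⋖ (⊤ : Subalgebra R S) → SubintegralExt T S →
      U ⋖ (⊤ : Subalgebra R S) → SubintegralExt U S →
      conductorOf T = conductorOf U → T = U :=
  stmt17_general hint hres
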